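/- Let n ≥ 1 and let F be an upset of a De Morgan lattice L. Then F is a classical prime n-filter on L if and only if there exists a lattice homomorphism h : L → (Fin n → Bool) (into the Boolean lattice Fin n → Bool with componentwise operations) satisfying h(¬x) i = !(h x i) for all x ∈ L and i : Fin n, such that F = {x : ∃ i, h x i = true}. -/

import Mathlib

/-- A De Morgan lattice: a distributive lattice with an antitone involution. -/
class DeMorgan (L : Type*) extends DistribLattice L where
  dneg : L → L
  dneg_dneg : ∀ x : L, dneg (dneg x) = x
  dneg_sup : ∀ x y : L, dneg (x ⊔ y) = dneg x ⊓ dneg y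

prefix:max "∼" => DeMorgan.dneg

section Defs

variable {α : Type*}

/-- An upward closed subset of a lattice. -/
def IsUpset [Lattice α] (F : Set α) : Prop :=
  ∀ ⦃x y : α⦄, x ∈ F → x ≤ y → y ∈ F

/-- A lattice filter: an upset closed under binary meets. -/
def IsLatFilter [Lattice α] (F : Set α) : Prop :=
  IsUpset F ∧ ∀ x y : α, x ∈ F → y ∈ F → x ⊓ y ∈ F

/-- An `n`-filter: an upset such that for every nonempty finite `Y`, if the meet of
every nonempty subset of `Y` of size at most `n` lies in `F`, then so does the meet of `Y`. -/
def IsNFilter [Lattice α] (n : ℕ) (F : Set α) : Prop :=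
  IsUpset F ∧ ∀ (Y : Finset α) (hY : Y.Nonempty),
    (∀ (X : Finset α) (hX : X.Nonempty), X ⊆ Y → X.card ≤ n → X.inf' hX id ∈ F) →
    Y.inf' hY id ∈ F

/-- A prime upset: `x ⊔ y ∈ F` implies `x ∈ F` or `y ∈ F`. -/
def IsPrimeUpset [Lattice α] (F : Set α) : Prop :=
  ∀ x y : α, x ⊔ y ∈ F → x ∈ F ∨ y ∈ F

/-- A downward closed subset of a lattice. -/
def IsDownset [Lattice α] (I : Set α) : Prop :=
  ∀ ⦃x y : α⦄, x ∈ I → y ≤ x → y ∈ I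

/-- A lattice ideal: a downset closed under binary joins. -/
def IsIdeal [Lattice α] (I : Set α) : Prop :=
  IsDownset I ∧ ∀ x y : α, x ∈ I → y ∈ I → x ⊔ y ∈ I

/-- An `n`-ideal: the order dual notion of an `n`-filter. -/
def IsNIdeal [Lattice α] (n : ℕ) (I : Set α) : Prop :=
  IsDownset I ∧ ∀ (Y : Finset α) (hY : Y.Nonempty),
    (∀ (X : Finset α) (hX : X.Nonempty), X ⊆ Y → X.card ≤ n → X.sup' hX id ∈ I) →
    Y.sup' hY id ∈ I

variable {L : Type*} [DeMorgan L]

/-- Almost complete upset: `x ∈ F` implies `x ⊓ (y ⊔ ∼y) ∈ F`. -/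
def AlmostComplete (F : Set L) : Prop := ∀ x ∈ F, ∀ y : L, x ⊓ (y ⊔ ∼y) ∈ F

/-- Complete upset: almost complete and nonempty. -/
def IsCompleteUpset (F : Set L) : Prop := AlmostComplete F ∧ F.Nonempty

/-- Almost consistent upset: `(x ⊓ ∼x) ⊔ y ∈ F` implies `y ∈ F`. -/
def AlmostConsistent (F : Set L) : Prop := ∀ x y : L, (x ⊓ ∼x) ⊔ y ∈ F → y ∈ F

/-- Consistent upset: almost consistent and not total. -/
def IsConsistentUpset (F : Set L) : Prop := AlmostConsistent F ∧ F ≠ Set.univ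

/-- Classical upset: complete and consistent. -/
def IsClassicalUpset (F : Set L) : Prop := IsCompleteUpset F ∧ IsConsistentUpset F

/-- Kalman upset. -/
def IsKalmanUpset (F : Set L) : Prop :=
  ∀ x y z u : L, ((x ⊓ ∼x) ⊓ z) ⊔ u ∈ F → ((y ⊔ ∼y) ⊓ z) ⊔ u ∈ F

/-- A homomorphism of De Morgan lattices. -/
def IsDMHom {L M : Type*} [DeMorgan L] [DeMorgan M] (h : L → M) : Prop :=
  (∀ x y : L, h (x ⊓ y) = h x ⊓ h y) ∧ (∀ x y : L, h (x ⊔ y) = h x ⊔ h y) ∧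
    ∀ x : L, h (∼x) = ∼(h x)

/-- The filter generated by all elements of the form `x ⊔ ∼x`. -/
def Fcomp (L : Type*) [DeMorgan L] : Set L :=
  {a | ∃ (s : Finset L) (hs : s.Nonempty), s.inf' hs (fun x => x ⊔ ∼x) ≤ a}

/-- The `n`-filter generated by a set. -/
def nFilterGen (n : ℕ) (U : Set L) : Set L :=
  ⋂₀ {F : Set L | IsNFilter n F ∧ U ⊆ F}

/-- `Comp U`. -/
def CompCl (U : Set L) : Set L := {x | ∃ a ∈ U, ∃ f ∈ Fcomp L, a ⊓ f ≤ x}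

/-- `Cons U`. -/
def ConsCl (U : Set L) : Set L := {x | ∃ f ∈ Fcomp L, ∼f ⊔ x ∈ U}

/-- A congruence of De Morgan lattices, as a binary relation. -/
def IsCongruence (θ : L → L → Prop) : Prop :=
  Equivalence θ ∧
  (∀ a b c d : L, θ a b → θ c d → θ (a ⊓ c) (b ⊓ d)) ∧
  (∀ a b c d : L, θ a b → θ c d → θ (a ⊔ c) (b ⊔ d)) ∧
  ∀ a b : L, θ a b → θ (∼a) (∼b)

end Defs

/-- The four-element De Morgan lattice `DM₁` on `Bool × Bool`. -/
instance : DeMorgan (Bool × Bool) :=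
  { (inferInstance : DistribLattice (Bool × Bool)) with
    dneg := fun p => (!p.2, !p.1)
    dneg_dneg := by decide
    dneg_sup := by decide }

/-- Powers of `DM₁`, with componentwise operations. -/
instance {ι : Type*} : DeMorgan (ι → Bool × Bool) :=
  { (inferInstance : DistribLattice (ι → Bool × Bool)) with
    dneg := fun f i => ∼(f i)
    dneg_dneg := fun f => funext fun i => DeMorgan.dneg_dneg (f i)
    dneg_sup := fun f g => funext fun i => DeMorgan.dneg_sup (f i) (g i) }

/-!
A De Morgan homomorphism `p : L → Bool` has a classical prime filter as truth set, and a union of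
`n` lattice filters is an `n`-filter; this gives one direction.

Conversely, call a finite family of elements of `F` pairwise incompatible if no meet of two of
them lies in `F`. If `c₀, …, cₙ` were such a family, the joins `yᵢ = ⋁_{j ≠ i} c_j` would have
every `n`-fold meet above some `c_k`, hence in `F`; but primality of `F` forbids the meet of all
of them to lie in `F`. So incompatible families have at most `n` members. For a family `S` of
maximum size, maximality makes each `{x | x ⊓ c ∈ F}` (`c ∈ S`) closed under meets, so these
are classical prime filters; they cover `F`, and their indicators are the components of `h`.
-/

open Finset

section Lattice

variable {α ι : Type*} [Lattice α] {F : Set α}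

theorem IsPrimeUpset.exists_mem_of_sup'_mem (hF : IsPrimeUpset F) {s : Finset ι}
    (hs : s.Nonempty) {f : ι → α} (h : s.sup' hs f ∈ F) : ∃ i ∈ s, f i ∈ F := by
  by_contra! hnot
  exact sup'_induction hs f (p := (· ∉ F)) (fun a ha b hb hab => (hF a b hab).elim ha hb) hnot h

theorem IsLatFilter.inf'_mem (hF : IsLatFilter F) {s : Finset ι} (hs : s.Nonempty) {f : ι → α}
    (h : ∀ i ∈ s, f i ∈ F) : s.inf' hs f ∈ F :=
  inf'_induction hs f (p := (· ∈ F)) (fun a ha b hb => hF.2 a b ha hb) h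

theorem IsLatFilter.inf_mem_iff (hF : IsLatFilter F) {x y : α} : x ⊓ y ∈ F ↔ x ∈ F ∧ y ∈ F :=
  ⟨fun h => ⟨hF.1 h inf_le_left, hF.1 h inf_le_right⟩, fun h => hF.2 x y h.1 h.2⟩

theorem IsPrimeUpset.sup_mem_iff (hF : IsPrimeUpset F) (hU : IsUpset F) {x y : α} :
    x ⊔ y ∈ F ↔ x ∈ F ∨ y ∈ F :=
  ⟨hF x y, fun h => h.elim (hU · le_sup_left) (hU · le_sup_right)⟩

theorem isNFilter_iUnion [Fintype ι] [Nonempty ι] {n : ℕ} (hι : Fintype.card ι ≤ n) {P : ι → Set α}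
    (hP : ∀ i, IsLatFilter (P i)) : IsNFilter n (⋃ i, P i) := by
  classical
  refine ⟨fun x y hx hxy => ?_, fun Y hY hsmall => ?_⟩
  · obtain ⟨i, hi⟩ := Set.mem_iUnion.1 hx
    exact Set.mem_iUnion.2 ⟨i, (hP i).1 hi hxy⟩
  by_contra hnot
  have hwitness : ∀ i, ∃ y ∈ Y, y ∉ P i := fun i => by
    by_contra! h
    exact hnot (Set.mem_iUnion.2 ⟨i, (hP i).inf'_mem hY h⟩)
  choose w hwY hw using hwitness
  obtain ⟨i, hi⟩ := Set.mem_iUnion.1 <| hsmall (univ.image w) (univ_nonempty.image w)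
    (image_subset_iff.2 fun i _ => hwY i) (card_image_le.trans hι)
  exact hw i ((hP i).1 hi (inf'_le id (mem_image_of_mem w (mem_univ i))))

end Lattice

section Incompatible

variable {α : Type*} [Lattice α] {F : Set α}

def PairwiseIncompatible (F : Set α) (S : Finset α) : Prop :=
  (S : Set α) ⊆ F ∧ (S : Set α).Pairwise fun a b => a ⊓ b ∉ F

def IsMaxPairwiseIncompatible (F : Set α) (S : Finset α) : Prop :=
  PairwiseIncompatible F S ∧ ∀ T, PairwiseIncompatible F T → #T ≤ #S

theorem PairwiseIncompatible.insert [DecidableEq α] {S : Finset α}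
    (hS : PairwiseIncompatible F S) {a : α} (ha : a ∈ F) (haS : ∀ b ∈ S, a ⊓ b ∉ F) :
    PairwiseIncompatible F (insert a S) ∧ #(insert a S) = #S + 1 := by
  have haS' : a ∉ S := fun h => haS a h (by rwa [inf_idem])
  refine ⟨⟨?_, ?_⟩, card_insert_of_notMem haS'⟩
  · rw [coe_insert]
    exact Set.insert_subset ha hS.1
  · rw [coe_insert, Set.pairwise_insert_of_notMem haS']
    exact ⟨hS.2, fun b hb => ⟨haS b hb, inf_comm a b ▸ haS b hb⟩⟩

theorem exists_isMaxPairwiseIncompatible {n : ℕ}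
    (hbdd : ∀ S, PairwiseIncompatible F S → #S ≤ n) : ∃ S, IsMaxPairwiseIncompatible F S := by
  set K := {k | ∃ S, PairwiseIncompatible F S ∧ #S = k}
  have hK : BddAbove K := ⟨n, by rintro _ ⟨S, hS, rfl⟩; exact hbdd S hS⟩
  have hempty : PairwiseIncompatible F ∅ := by simp [PairwiseIncompatible]
  obtain ⟨S, hS, hcard⟩ := Nat.sSup_mem (s := K) ⟨0, ∅, hempty, rfl⟩ hK
  exact ⟨S, hS, fun T hT => hcard ▸ le_csSup hK ⟨T, hT, rfl⟩⟩

theorem IsMaxPairwiseIncompatible.mem_iff (hU : IsUpset F) {S : Finset α}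
    (hS : IsMaxPairwiseIncompatible F S) {x : α} : x ∈ F ↔ ∃ c ∈ S, x ⊓ c ∈ F := by
  classical
  refine ⟨fun hx => ?_, fun ⟨c, _, hxc⟩ => hU hxc inf_le_left⟩
  by_contra! h
  obtain ⟨hT, hcard⟩ := hS.1.insert hx h
  have := hS.2 _ hT
  omega

theorem IsMaxPairwiseIncompatible.inf_inf_mem (hU : IsUpset F) {S : Finset α}
    (hS : IsMaxPairwiseIncompatible F S) {c x y : α} (hc : c ∈ S) (hx : x ⊓ c ∈ F)
    (hy : y ⊓ c ∈ F) : x ⊓ y ⊓ c ∈ F := by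
  classical
  by_contra hxy
  -- otherwise replacing `c` by `x ⊓ c` and `y ⊓ c` would give a larger family
  have hS₀ : PairwiseIncompatible F (S.erase c) :=
    ⟨(coe_subset.2 (erase_subset c S)).trans hS.1.1, hS.1.2.mono (coe_subset.2 (erase_subset c S))⟩
  have incompatible_of_le {a : α} (hac : a ≤ c) : ∀ b ∈ S.erase c, a ⊓ b ∉ F := fun b hb hab =>
    hS.1.2 hc (mem_of_mem_erase hb) (ne_of_mem_erase hb).symm (hU hab (inf_le_inf_right b hac))
  obtain ⟨hS₁, hcard₁⟩ := hS₀.insert hx (incompatible_of_le inf_le_right)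
  have hyx : y ⊓ c ⊓ (x ⊓ c) ∉ F := fun h =>
    hxy (hU h (by rw [inf_inf_inf_comm, inf_idem, inf_comm y]))
  obtain ⟨hS₂, hcard₂⟩ :=
    hS₁.insert hy <| forall_mem_insert _ _ _ |>.2 ⟨hyx, incompatible_of_le inf_le_right⟩
  have := hS.2 _ hS₂
  rw [hcard₂, hcard₁, card_erase_add_one hc] at this
  omega

end Incompatible

section DistribLattice

variable {α : Type*} [DistribLattice α] {F : Set α}

theorem IsPrimeUpset.exists_inf_mem_of_le_sup' {ι : Type*} (hF : IsPrimeUpset F) {s : Finset ι}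
    (hs : s.Nonempty) {f : ι → α} {a : α} (ha : a ∈ F) (hle : a ≤ s.sup' hs f) :
    ∃ i ∈ s, a ⊓ f i ∈ F :=
  hF.exists_mem_of_sup'_mem hs (by rwa [← sup'_inf_distrib_left, inf_eq_left.2 hle])

theorem PairwiseIncompatible.card_le {n : ℕ} (hn : 1 ≤ n) (hP : IsPrimeUpset F)
    (hN : IsNFilter n F) {S : Finset α} (hS : PairwiseIncompatible F S) : #S ≤ n := by
  classical
  by_contra! hlt
  have hnt : S.Nontrivial := one_lt_card_iff_nontrivial.1 (by omega)
  set y : α → α := fun c => (S.erase c).sup' hnt.erase_nonempty id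
  have le_y {b c : α} (hb : b ∈ S) (hbc : b ≠ c) : b ≤ y c := le_sup' id (mem_erase.2 ⟨hbc, hb⟩)
  have hY : (S.image y).Nonempty := hnt.nonempty.image y
  have hsmall : ∀ (X : Finset α) (hX : X.Nonempty), X ⊆ S.image y → #X ≤ n →
      X.inf' hX id ∈ F := by
    intro X hX hXY hXn
    -- otherwise picking for each `c ∈ S` some `x = y e ∈ X` with `c ≰ x` injects `S` into `X`,
    -- since `c ≤ y e` unless `c = e`
    obtain ⟨c, hcS, hc⟩ : ∃ c ∈ S, ∀ x ∈ X, c ≤ x := by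
      by_contra! h
      choose! g hgX hcg using h
      have hinj : Set.InjOn g S := fun c hc d hd hcd => by
        obtain ⟨e, -, he⟩ := mem_image.1 (hXY (hgX c hc))
        have eq_e : ∀ b ∈ S, g b = y e → b = e := fun b hb hbe =>
          by_contra fun hne => hcg b hb (hbe ▸ le_y hb hne)
        exact (eq_e c hc he.symm).trans (eq_e d hd (hcd ▸ he.symm)).symm
      have := card_le_card_of_injOn g hgX hinj
      omega
    exact hN.1 (hS.1 hcS) (le_inf' hX id hc)
  set z := (S.image y).inf' hY id
  have hz : z ∈ F := hN.2 _ hY hsmall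
  have z_le {c : α} (hc : c ∈ S) : z ≤ y c := inf'_le id (mem_image_of_mem y hc)
  obtain ⟨c₀, hc₀⟩ := hnt.nonempty
  obtain ⟨c, hc, hzc⟩ := hP.exists_inf_mem_of_le_sup' hnt.erase_nonempty hz (z_le hc₀)
  obtain ⟨d, hd, hzcd⟩ := hP.exists_inf_mem_of_le_sup' hnt.erase_nonempty hzc
    (inf_le_left.trans (z_le (mem_of_mem_erase hc)))
  exact hS.2 (mem_of_mem_erase hc) (mem_of_mem_erase hd) (ne_of_mem_erase hd).symm
    (hN.1 hzcd (inf_le_inf_right d inf_le_right))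

end DistribLattice

theorem Fintype.exists_surjective_fin {α : Type*} [Fintype α] [Nonempty α] {n : ℕ}
    (h : Fintype.card α ≤ n) : ∃ f : Fin n → α, Function.Surjective f := by
  obtain ⟨e⟩ := Function.Embedding.nonempty_of_card_le (α := α) (β := Fin n) (by simpa using h)
  exact ⟨Function.invFun e, Function.invFun_surjective e.injective⟩

section DeMorgan

variable {L : Type*} [DeMorgan L] {F : Set L}

structure IsBoolHom (p : L → Bool) : Prop where
  map_inf : ∀ x y, p (x ⊓ y) = p x ⊓ p y
  map_sup : ∀ x y, p (x ⊔ y) = p x ⊔ p y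
  map_dneg : ∀ x, p (∼x) = !p x

theorem isBoolHom_apply_iff {ι : Type*} {h : L → ι → Bool} :
    ((∀ x y : L, h (x ⊓ y) = h x ⊓ h y) ∧ (∀ x y : L, h (x ⊔ y) = h x ⊔ h y) ∧
      ∀ (x : L) (i : ι), h (∼x) i = !(h x i)) ↔ ∀ i, IsBoolHom (h · i) :=
  ⟨fun ⟨hinf, hsup, hdneg⟩ i =>
    ⟨fun x y => congrFun (hinf x y) i, fun x y => congrFun (hsup x y) i, (hdneg · i)⟩,
    fun H => ⟨fun x y => funext fun i => (H i).map_inf x y,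
      fun x y => funext fun i => (H i).map_sup x y, fun x i => (H i).map_dneg x⟩⟩

theorem IsBoolHom.isLatFilter {p : L → Bool} (hp : IsBoolHom p) :
    IsLatFilter {x | p x = true} := by
  refine ⟨fun x y (hx : p x = true) hxy => ?_, fun x y (hx : p x = true) (hy : p y = true) => ?_⟩
  · have h := hp.map_inf x y
    rw [inf_eq_left.2 hxy, hx] at h
    simpa using h.symm
  · simp [hp.map_inf, hx, hy]

theorem isClassicalUpset_setOf_exists [Nonempty L] {ι : Type*} [Nonempty ι] {p : ι → L → Bool}
    (hp : ∀ i, IsBoolHom (p i)) : IsClassicalUpset {x | ∃ i, p i x = true} := by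
  obtain ⟨x₀⟩ := ‹Nonempty L›
  obtain ⟨i₀⟩ := ‹Nonempty ι›
  refine ⟨⟨fun x ⟨i, hi⟩ y => ⟨i, ?_⟩, x₀ ⊔ ∼x₀, i₀, ?_⟩, fun x y ⟨i, hi⟩ => ⟨i, ?_⟩, fun h => ?_⟩
  · simp [(hp i).map_inf, (hp i).map_sup, (hp i).map_dneg, hi]
  · simp [(hp i₀).map_sup, (hp i₀).map_dneg]
  · simpa [(hp i).map_inf, (hp i).map_sup, (hp i).map_dneg] using hi
  · obtain ⟨i, hi⟩ : x₀ ⊓ ∼x₀ ∈ {x | ∃ i, p i x = true} := h ▸ Set.mem_univ _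
    simp [(hp i).map_inf, (hp i).map_dneg] at hi

theorem isPrimeUpset_setOf_exists {ι : Type*} {p : ι → L → Bool} (hp : ∀ i, IsBoolHom (p i)) :
    IsPrimeUpset {x | ∃ i, p i x = true} := fun x y ⟨i, hi⟩ => by
  rw [(hp i).map_sup, Bool.max_eq_or, Bool.or_eq_true] at hi
  exact hi.imp (⟨i, ·⟩) (⟨i, ·⟩)

theorem isNFilter_setOf_exists {ι : Type*} [Fintype ι] [Nonempty ι] {n : ℕ}
    (hι : Fintype.card ι ≤ n) {p : ι → L → Bool} (hp : ∀ i, IsBoolHom (p i)) :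
    IsNFilter n {x | ∃ i, p i x = true} := by
  rw [Set.ofPred_exists]
  exact isNFilter_iUnion hι fun i => (hp i).isLatFilter

theorem IsConsistentUpset.inf_dneg_notMem (hU : IsUpset F) (hF : IsConsistentUpset F) (x : L) :
    x ⊓ ∼x ∉ F := fun h =>
  hF.2 (Set.eq_univ_of_forall fun y => hF.1 x y (hU h le_sup_left))

theorem isBoolHom_decide_mem {P : Set L} [DecidablePred (· ∈ P)] (hP : IsLatFilter P)
    (hprime : IsPrimeUpset P) (hcompl : ∀ x, x ⊔ ∼x ∈ P) (hcons : ∀ x, x ⊓ ∼x ∉ P) :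
    IsBoolHom (decide <| · ∈ P) := by
  have dneg_mem_iff (x : L) : ∼x ∈ P ↔ x ∉ P :=
    ⟨fun hnx hx => hcons x (hP.2 x _ hx hnx), (hprime x _ (hcompl x)).resolve_left⟩
  refine ⟨fun x y => ?_, fun x y => ?_, fun x => ?_⟩
  · simp [hP.inf_mem_iff]
  · simp [hprime.sup_mem_iff hP.1]
  · simp [dneg_mem_iff]

theorem IsMaxPairwiseIncompatible.isBoolHom [DecidablePred (· ∈ F)] (hU : IsUpset F)
    (hP : IsPrimeUpset F) (hcl : IsClassicalUpset F) {S : Finset L}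
    (hS : IsMaxPairwiseIncompatible F S) {c : L} (hc : c ∈ S) :
    IsBoolHom (decide <| · ⊓ c ∈ F) := by
  refine isBoolHom_decide_mem (P := {x | x ⊓ c ∈ F}) ⟨fun x y hx hxy => ?_,
    fun x y hx hy => hS.inf_inf_mem hU hc hx hy⟩ (fun x y hxy => ?_) (fun x => ?_) (fun x h => ?_)
  · exact hU hx (inf_le_inf_right c hxy)
  · exact hP _ _ (by rwa [Set.mem_ofPred_eq, inf_sup_right] at hxy)
  · rw [Set.mem_ofPred_eq, inf_comm]
    exact hcl.1.1 c (hS.1.1 hc) x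
  · exact hcl.2.inf_dneg_notMem hU x (hU h inf_le_left)

theorem exists_boolHom_cover {n : ℕ} (hn : 1 ≤ n) (hcl : IsClassicalUpset F)
    (hP : IsPrimeUpset F) (hN : IsNFilter n F) :
    ∃ p : Fin n → L → Bool, (∀ i, IsBoolHom (p i)) ∧ F = {x | ∃ i, p i x = true} := by
  classical
  have hbdd (S : Finset L) (hS : PairwiseIncompatible F S) : #S ≤ n := hS.card_le hn hP hN
  obtain ⟨S, hS⟩ := exists_isMaxPairwiseIncompatible hbdd
  have : Nonempty S := by
    obtain ⟨x, hx⟩ := hcl.1.2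
    obtain ⟨c, hc, -⟩ := (hS.mem_iff hN.1).1 hx
    exact ⟨⟨c, hc⟩⟩
  obtain ⟨σ, hσ⟩ := Fintype.exists_surjective_fin (α := S) (by simpa using hbdd S hS.1)
  refine ⟨fun i x => decide (x ⊓ σ i ∈ F), fun i => hS.isBoolHom hN.1 hP hcl (σ i).2,
    Set.ext fun x => ?_⟩
  rw [hS.mem_iff hN.1]
  simp only [decide_eq_true_eq, Set.mem_ofPred_eq]
  refine ⟨fun ⟨c, hc, hxc⟩ => ?_, fun ⟨i, hi⟩ => ⟨_, (σ i).2, hi⟩⟩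
  obtain ⟨i, hi⟩ := hσ ⟨c, hc⟩
  exact ⟨i, by rwa [hi]⟩

end DeMorgan

theorem statement6_general {L : Type*} [DeMorgan L] [Nonempty L] (n : ℕ) (hn : 1 ≤ n)
    (F : Set L) :
    (IsClassicalUpset F ∧ IsPrimeUpset F ∧ IsNFilter n F) ↔
      ∃ h : L → (Fin n → Bool),
        (∀ x y : L, h (x ⊓ y) = h x ⊓ h y) ∧
        (∀ x y : L, h (x ⊔ y) = h x ⊔ h y) ∧
        (∀ (x : L) (i : Fin n), h (∼x) i = !(h x i)) ∧
        F = {x : L | ∃ i : Fin n, h x i = true} := by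
  have : Nonempty (Fin n) := ⟨⟨0, hn⟩⟩
  constructor
  · rintro ⟨hcl, hP, hN⟩
    obtain ⟨p, hp, rfl⟩ := exists_boolHom_cover hn hcl hP hN
    obtain ⟨hinf, hsup, hdneg⟩ := isBoolHom_apply_iff.2 hp
    exact ⟨fun x i => p i x, hinf, hsup, hdneg, rfl⟩
  · rintro ⟨h, hinf, hsup, hdneg, rfl⟩
    have hp := isBoolHom_apply_iff.1 ⟨hinf, hsup, hdneg⟩
    exact ⟨isClassicalUpset_setOf_exists hp, isPrimeUpset_setOf_exists hp,
      isNFilter_setOf_exists (Fintype.card_fin n).le hp⟩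

/-- classical prime `n`-filters are precisely the preimages of the designated
set of `BAₙ` under lattice homomorphisms into `Fin n → Bool` commuting with negation. -/
theorem statement6 {L : Type*} [DeMorgan L] [Nonempty L] (n : ℕ) (hn : 1 ≤ n)
    (F : Set L) (hF : IsUpset F) :
    (IsClassicalUpset F ∧ IsPrimeUpset F ∧ IsNFilter n F) ↔
      ∃ h : L → (Fin n → Bool),
        (∀ x y : L, h (x ⊓ y) = h x ⊓ h y) ∧
        (∀ x y : L, h (x ⊔ y) = h x ⊔ h y) ∧
        (∀ (x : L) (i : Fin n), h (∼x) i = !(h x i)) ∧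
        F = {x : L | ∃ i : Fin n, h x i = true} :=
  statement6_general n hn F
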